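/- Let ε > 0, ρ_ε a finite-horizon kernel, E ⊆ ℝ^d a set of finite 𝔓_ε-perimeter, and x, y ∈ E^(1). Then: (i) B_ε(x) ∩ E^(1) ⊆ E^x; (ii) either E^x = E^y or dist(E^x, E^y) ≥ ε; (iii) 𝔓_ε(E^x) ≤ 𝔓_ε(E) < ∞ and E^x is ε-indecomposable. -/

import Mathlib

open MeasureTheory Metric Set Filter
open scoped ENNReal Topology

noncomputable section

/-- The Gagliardo perimeter of a set `A` with respect to a kernel `ρ`. -/
def gagPer {d : ℕ} (ρ : EuclideanSpace ℝ (Fin d) → ℝ≥0∞)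
    (A : Set (EuclideanSpace ℝ (Fin d))) : ℝ≥0∞ :=
  2 * ∫⁻ x in A, ∫⁻ y in Aᶜ, ρ (x - y) / edist x y

/-- The support of the Lebesgue measure restricted to `A`. -/
def measSupp {d : ℕ} (A : Set (EuclideanSpace ℝ (Fin d))) : Set (EuclideanSpace ℝ (Fin d)) :=
  {x | ∀ r : ℝ, 0 < r → 0 < volume (A ∩ ball x r)}

/-- A finite-horizon kernel with horizon `ε`. -/
def IsFiniteHorizonKernel {d : ℕ} (ε : ℝ) (ρ : EuclideanSpace ℝ (Fin d) → ℝ≥0∞) : Prop :=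
  Measurable ρ ∧
    measSupp (Function.support ρ) = closedBall (0 : EuclideanSpace ℝ (Fin d)) ε

/-- `ε`-decomposability of a set with respect to the Gagliardo perimeter associated to `ρ`. -/
def epsDecomposable {d : ℕ} (ρ : EuclideanSpace ℝ (Fin d) → ℝ≥0∞)
    (A : Set (EuclideanSpace ℝ (Fin d))) : Prop :=
  ∃ E₁ E₂ : Set (EuclideanSpace ℝ (Fin d)), MeasurableSet E₁ ∧ MeasurableSet E₂ ∧
    E₁ ∪ E₂ = A ∧ Disjoint E₁ E₂ ∧ 0 < volume E₁ ∧ 0 < volume E₂ ∧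
    gagPer ρ E₁ < ⊤ ∧ gagPer ρ E₂ < ⊤ ∧ gagPer ρ A = gagPer ρ E₁ + gagPer ρ E₂

/-- The set of points of Lebesgue density one of `A`. -/
def densityOne {d : ℕ} (A : Set (EuclideanSpace ℝ (Fin d))) : Set (EuclideanSpace ℝ (Fin d)) :=
  {x | Tendsto (fun r : ℝ => volume (A ∩ ball x r) / volume (ball x r)) (𝓝[>] 0) (𝓝 1)}

/-- Two points of `densityOne A` are `ε`-connected in `A` if they can be joined by a finite
chain of points of `densityOne A` with consecutive distances `< ε`. -/
def epsConnected {d : ℕ} (ε : ℝ) (A : Set (EuclideanSpace ℝ (Fin d)))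
    (x y : EuclideanSpace ℝ (Fin d)) : Prop :=
  ∃ N : ℕ, ∃ z : ℕ → EuclideanSpace ℝ (Fin d), z 0 = x ∧ z N = y ∧
    (∀ i ≤ N, z i ∈ densityOne A) ∧ ∀ i < N, dist (z i) (z (i + 1)) < ε

/-- The `ε`-connected component of `A` containing `x`. -/
def epsComponent {d : ℕ} (ε : ℝ) (A : Set (EuclideanSpace ℝ (Fin d)))
    (x : EuclideanSpace ℝ (Fin d)) : Set (EuclideanSpace ℝ (Fin d)) :=
  {y ∈ densityOne A | epsConnected ε A x y}

/-- The (extended) distance between two sets. -/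
def setEDist {d : ℕ} (S T : Set (EuclideanSpace ℝ (Fin d))) : ℝ≥0∞ :=
  ⨅ x ∈ S, ⨅ y ∈ T, edist x y

/-!
Being `ε`-connected is an equivalence relation on `E^(1)` whose classes are saturated under
`ε`-steps; this gives (i) and (ii). A component `C` agrees a.e. with `U ∩ E`, where `U` is its open
`ε`-thickening, and every point of `C` is at distance `≥ ε` from `E \ U`. The kernel vanishes a.e.
outside `B_ε(0)`, so `C` does not interact with `E \ U` and `𝔓_ε(C)` is at most twice the
interaction of `C` with `Eᶜ`, hence at most `𝔓_ε(E)`.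

A splitting `C = E₁ ∪ E₂` with additive perimeter has no interaction between `E₁` and `E₂`. By a
Steinhaus-type argument at density points, the interaction is positive as soon as the measure
supports of `E₁` and `E₂` come closer than `ε`. But `C` lies in the union of these supports, and
the part of it in the support of `E₁` is nonempty and closed under `ε`-steps inside `C`, so it is
all of `C`, which also meets the support of `E₂`.
-/

section EpsConnected

variable {d : ℕ} {ε : ℝ} {A S : Set (EuclideanSpace ℝ (Fin d))} {x y w : EuclideanSpace ℝ (Fin d)}

theorem epsConnected_refl (hx : x ∈ densityOne A) : epsConnected ε A x x :=
  ⟨0, fun _ => x, rfl, rfl, fun _ _ => hx, fun _ h => absurd h (Nat.not_lt_zero _)⟩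

theorem epsConnected.right_mem (h : epsConnected ε A x y) : y ∈ densityOne A := by
  obtain ⟨N, z, -, rfl, hz, -⟩ := h
  exact hz N le_rfl

theorem epsConnected.symm (h : epsConnected ε A x y) : epsConnected ε A y x := by
  obtain ⟨N, z, rfl, rfl, hz, hstep⟩ := h
  refine ⟨N, fun i => z (N - i), by simp, by simp, fun i _ => hz _ (Nat.sub_le _ _),
    fun i hi => ?_⟩
  show dist (z (N - i)) (z (N - (i + 1))) < ε
  rw [dist_comm, show N - i = N - (i + 1) + 1 by omega]
  exact hstep _ (by omega)

theorem epsConnected.snoc (h : epsConnected ε A x y) (hw : w ∈ densityOne A)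
    (hyw : dist y w < ε) : epsConnected ε A x w := by
  obtain ⟨N, z, rfl, rfl, hz, hstep⟩ := h
  refine ⟨N + 1, Function.update z (N + 1) w, by simp, by simp, fun i hi => ?_, fun i hi => ?_⟩
  · rcases Nat.le_succ_iff.mp hi with hi | rfl
    · simpa [Function.update_of_ne (show i ≠ N + 1 by omega)] using hz i hi
    · simpa using hw
  · rcases Nat.lt_succ_iff_lt_or_eq.mp hi with hi | rfl
    · simpa [Function.update_of_ne (show i ≠ N + 1 by omega),
        Function.update_of_ne (show i + 1 ≠ N + 1 by omega)] using hstep i hi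
    · simpa [Function.update_of_ne (show i ≠ i + 1 by omega)] using hyw

theorem epsConnected.mem_of_forall_dist_lt (h : epsConnected ε A x y) (hx : x ∈ S)
    (hS : ∀ a ∈ S, ∀ b ∈ densityOne A, dist a b < ε → b ∈ S) : y ∈ S := by
  obtain ⟨N, z, rfl, rfl, hz, hstep⟩ := h
  suffices ∀ i ≤ N, z i ∈ S from this N le_rfl
  intro i hi
  induction i with
  | zero => exact hx
  | succ i ih => exact hS _ (ih (by omega)) _ (hz _ hi) (hstep i hi)

theorem epsConnected.trans (hxy : epsConnected ε A x y) (hyw : epsConnected ε A y w) :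
    epsConnected ε A x w :=
  hyw.mem_of_forall_dist_lt (S := {v | epsConnected ε A x v}) hxy
    fun _ ha _ hb hab => ha.snoc hb hab

theorem mem_epsComponent_iff : y ∈ epsComponent ε A x ↔ epsConnected ε A x y :=
  ⟨And.right, fun h => ⟨h.right_mem, h⟩⟩

theorem epsComponent_eq_of_mem (h : y ∈ epsComponent ε A x) :
    epsComponent ε A y = epsComponent ε A x := by
  ext w
  simp only [mem_epsComponent_iff]
  exact ⟨(mem_epsComponent_iff.mp h).trans, (mem_epsComponent_iff.mp h).symm.trans⟩

theorem ball_inter_densityOne_subset_epsComponent (hx : x ∈ densityOne A) :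
    ball x ε ∩ densityOne A ⊆ epsComponent ε A x := fun y ⟨hy, hyA⟩ =>
  mem_epsComponent_iff.mpr ((epsConnected_refl hx).snoc hyA (dist_comm x y ▸ hy))

theorem epsComponent_eq_of_dist_lt {p q : EuclideanSpace ℝ (Fin d)}
    (hp : p ∈ epsComponent ε A x) (hq : q ∈ epsComponent ε A y) (hpq : dist p q < ε) :
    epsComponent ε A x = epsComponent ε A y := by
  rw [← epsComponent_eq_of_mem hp, ← epsComponent_eq_of_mem hq,
    epsComponent_eq_of_mem (ball_inter_densityOne_subset_epsComponent hp.1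
      ⟨mem_ball.mpr (dist_comm p q ▸ hpq), hq.1⟩)]

theorem epsComponent_eq_or_le_setEDist :
    epsComponent ε A x = epsComponent ε A y ∨
      ENNReal.ofReal ε ≤ setEDist (epsComponent ε A x) (epsComponent ε A y) := by
  refine or_iff_not_imp_left.mpr fun hne => le_iInf₂ fun p hp => le_iInf₂ fun q hq => ?_
  by_contra! hlt
  exact hne (epsComponent_eq_of_dist_lt hp hq (edist_lt_ofReal.mp hlt))

theorem epsComponent_subset_of_forall_dist_lt (hx : x ∈ S)
    (hS : ∀ a ∈ S, ∀ b ∈ densityOne A, dist a b < ε → b ∈ S) : epsComponent ε A x ⊆ S :=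
  fun _ hy => (mem_epsComponent_iff.mp hy).mem_of_forall_dist_lt hx hS

theorem epsComponent_eq_thickening_inter (hε : 0 < ε) :
    epsComponent ε A x = thickening ε (epsComponent ε A x) ∩ densityOne A := by
  refine Subset.antisymm (fun y hy => ⟨?_, hy.1⟩) fun y ⟨hy, hyA⟩ => ?_
  · exact mem_thickening_iff.mpr ⟨y, hy, by simpa using hε⟩
  · obtain ⟨c, hc, hyc⟩ := mem_thickening_iff.mp hy
    rw [← epsComponent_eq_of_mem hc]
    exact ball_inter_densityOne_subset_epsComponent hc.1
      ⟨mem_ball.mpr (dist_comm y c ▸ hyc), hyA⟩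

end EpsConnected

section HaarBalls

variable {E : Type*} [NormedAddCommGroup E] [NormedSpace ℝ E] [MeasurableSpace E] [BorelSpace E]
  [FiniteDimensional ℝ E] (μ : Measure E) [μ.IsAddHaarMeasure]

theorem ball_ae_eq_closedBall (z : E) {r : ℝ} (hr : r ≠ 0) : ball z r =ᵐ[μ] closedBall z r := by
  refine ae_eq_set.mpr ⟨by simp [sdiff_eq_empty.mpr ball_subset_closedBall], ?_⟩
  rw [closedBall_sdiff_ball]
  exact Measure.addHaar_sphere_of_ne_zero μ z hr

theorem measure_ball_two_mul (z₁ z₂ : E) (r : ℝ) :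
    μ (ball z₂ (2 * r)) = 2 ^ Module.finrank ℝ E * μ (ball z₁ r) := by
  rw [Measure.addHaar_ball_mul_of_pos μ z₂ two_pos, Measure.addHaar_ball_center μ z₁,
    ENNReal.ofReal_pow zero_le_two, ENNReal.ofReal_ofNat]

end HaarBalls

section Density

variable {d : ℕ} {A P P₁ P₂ : Set (EuclideanSpace ℝ (Fin d))} {z z₁ z₂ : EuclideanSpace ℝ (Fin d)}

theorem densityOne_ae_eq (hA : MeasurableSet A) : densityOne A =ᵐ[volume] A := by
  refine eventuallyEq_set.mpr ?_
  filter_upwards [Besicovitch.ae_tendsto_measure_inter_div_of_measurableSet volume hA] with x hx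
  replace hx : Tendsto (fun r => volume (A ∩ ball x r) / volume (ball x r)) (𝓝[>] 0)
      (𝓝 (A.indicator 1 x)) := by
    refine hx.congr' (eventually_nhdsWithin_of_forall fun r hr => ?_)
    have h := ball_ae_eq_closedBall volume x (ne_of_gt hr)
    dsimp only
    rw [measure_congr h, measure_congr ((ae_eq_refl A).inter h)]
  by_cases hxA : x ∈ A
  · simpa [densityOne, hxA] using hx
  · simp only [densityOne, mem_ofPred_eq, hxA, iff_false]
    intro h1
    simp only [hxA, not_false_eq_true, indicator_of_notMem] at hx
    exact zero_ne_one (tendsto_nhds_unique hx h1)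

theorem measure_inter_densityOne (hA : MeasurableSet A) (S : Set (EuclideanSpace ℝ (Fin d))) :
    volume (S ∩ densityOne A) = volume (S ∩ A) :=
  measure_congr ((ae_eq_refl S).inter (densityOne_ae_eq hA))

theorem densityOne_subset_measSupp : densityOne A ⊆ measSupp A := by
  intro x hx r hr
  obtain ⟨s, hs, hsr⟩ := ((hx.eventually (eventually_ne_nhds one_ne_zero)).and
    (Ioo_mem_nhdsGT hr)).exists
  refine pos_iff_ne_zero.mpr fun h0 => hs ?_
  rw [measure_mono_null (inter_subset_inter_right _ (ball_subset_ball hsr.2.le)) h0,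
    ENNReal.zero_div]

theorem measSupp_union (S T : Set (EuclideanSpace ℝ (Fin d))) :
    measSupp (S ∪ T) ⊆ measSupp S ∪ measSupp T := by
  intro z hz
  by_contra! h
  simp only [mem_union, not_or, measSupp, mem_ofPred_eq, not_forall, not_lt,
    nonpos_iff_eq_zero] at h
  obtain ⟨⟨r, hr, hSr⟩, ⟨s, hs, hTs⟩⟩ := h
  refine (hz _ (lt_min hr hs)).ne' (measure_mono_null ?_ (measure_union_null hSr hTs))
  rw [union_inter_distrib_right]
  exact union_subset_union (inter_subset_inter_right _ (ball_subset_ball (min_le_left _ _)))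
    (inter_subset_inter_right _ (ball_subset_ball (min_le_right _ _)))

theorem measure_sdiff_measSupp (S : Set (EuclideanSpace ℝ (Fin d))) :
    volume (S \ measSupp S) = 0 := by
  refine measure_null_of_locally_null _ fun z hz => ?_
  obtain ⟨r, hr, hSr⟩ : ∃ r, 0 < r ∧ volume (S ∩ ball z r) = 0 := by
    simpa [measSupp] using hz.2
  exact ⟨_, inter_mem_nhdsWithin _ (ball_mem_nhds z hr),
    measure_mono_null (inter_subset_inter_left _ sdiff_subset) hSr⟩

theorem measure_inter_measSupp (S : Set (EuclideanSpace ℝ (Fin d))) :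
    volume (S ∩ measSupp S) = volume S := by
  rw [← sdiff_sdiff_right_self, measure_sdiff_null (measure_sdiff_measSupp S)]

theorem measSupp_subset_closure_densityOne (hP : MeasurableSet P) :
    measSupp P ⊆ closure (densityOne P) := by
  refine fun q hq => Metric.mem_closure_iff.mpr fun δ hδ => ?_
  have hpos : volume (P ∩ ball q δ ∩ densityOne P) ≠ 0 := by
    rw [measure_inter_densityOne hP, inter_right_comm, inter_self]
    exact (hq δ hδ).ne'
  obtain ⟨w, hw, hwP⟩ := nonempty_of_measure_ne_zero hpos
  exact ⟨w, hwP, mem_ball'.mp hw.2⟩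

theorem tendsto_measure_ball_sdiff_div (hP : MeasurableSet P) (hz : z ∈ densityOne P) :
    Tendsto (fun s => volume (ball z s \ P) / volume (ball z s)) (𝓝[>] 0) (𝓝 0) := by
  have h := ENNReal.Tendsto.sub tendsto_const_nhds hz (Or.inl ENNReal.one_ne_top)
  rw [tsub_self] at h
  refine h.congr' (eventually_nhdsWithin_of_forall fun s hs => ?_)
  have hB : volume (ball z s) ≠ 0 := (measure_ball_pos volume z hs).ne'
  dsimp only
  rw [← sdiff_inter_self_eq_sdiff, measure_sdiff inter_subset_right
    (hP.inter measurableSet_ball).nullMeasurableSet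
    ((measure_mono inter_subset_right).trans_lt measure_ball_lt_top).ne,
    ENNReal.sub_div fun _ _ => hB, ENNReal.div_self hB measure_ball_lt_top.ne]

theorem measure_ball_sdiff_preimage_sub_le (hP : MeasurableSet P) {w : EuclideanSpace ℝ (Fin d)}
    {r : ℝ} (hw : dist (z₁ - z₂) w < r) :
    volume (ball z₁ r \ (· - w) ⁻¹' P) ≤ volume (ball z₂ (2 * r) \ P) := by
  have hpre : (· - w) ⁻¹' (ball (z₁ - w) r \ P) = ball z₁ r \ (· - w) ⁻¹' P := by
    ext a; simp
  rw [← hpre, (measurePreserving_sub_right volume w).measure_preimage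
    (measurableSet_ball.diff hP).nullMeasurableSet]
  refine measure_mono (sdiff_subset_sdiff_left (ball_subset_ball' ?_))
  rw [dist_eq_norm, show z₁ - w - z₂ = z₁ - z₂ - w by abel, ← dist_eq_norm]
  linarith

theorem eventually_measure_inter_preimage_sub_pos (hP₁ : MeasurableSet P₁)
    (hP₂ : MeasurableSet P₂) (h₁ : z₁ ∈ densityOne P₁) (h₂ : z₂ ∈ densityOne P₂) :
    ∀ᶠ w in 𝓝 (z₁ - z₂), 0 < volume (P₁ ∩ (· - w) ⁻¹' P₂) := by
  -- Take `r` with `P₁` filling more than half of `B(z₁, r)` and `P₂` missing less than a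
  -- `2⁻ᵈ/2` fraction of `B(z₂, 2r) ⊇ B(z₁ - w, r)`; then `P₂ + w` also fills half of `B(z₁, r)`.
  have e₁ : ∀ᶠ s in 𝓝[>] (0 : ℝ), volume (ball z₁ s \ P₁) / volume (ball z₁ s) < 2⁻¹ :=
    (tendsto_measure_ball_sdiff_div hP₁ h₁).eventually (gt_mem_nhds (by simp))
  have e₂ : ∀ᶠ s in 𝓝[>] (0 : ℝ),
      volume (ball z₂ (2 * s) \ P₂) / volume (ball z₂ (2 * s)) < 2⁻¹ * (2 ^ d)⁻¹ :=
    eventually_nhdsGT_zero_mul_left two_pos ((tendsto_measure_ball_sdiff_div hP₂ h₂).eventually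
      (gt_mem_nhds (ENNReal.mul_pos (by simp) (by simp))))
  obtain ⟨r, ⟨hr₁, hr₂⟩, hr : 0 < r⟩ := ((e₁.and e₂).and self_mem_nhdsWithin).exists
  refine eventually_of_mem (ball_mem_nhds _ hr) fun w hw => ?_
  set B := ball z₁ r
  have hB : volume B ≠ 0 := (measure_ball_pos volume z₁ hr).ne'
  have hd₁ : volume (B \ P₁) < 2⁻¹ * volume B :=
    (ENNReal.div_lt_iff (Or.inl hB) (Or.inl measure_ball_lt_top.ne)).mp hr₁
  have hd₂ : volume (B \ (· - w) ⁻¹' P₂) < 2⁻¹ * volume B :=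
    calc volume (B \ (· - w) ⁻¹' P₂) ≤ volume (ball z₂ (2 * r) \ P₂) :=
          measure_ball_sdiff_preimage_sub_le hP₂ (dist_comm w _ ▸ mem_ball.mp hw)
      _ < 2⁻¹ * (2 ^ d)⁻¹ * volume (ball z₂ (2 * r)) :=
          (ENNReal.div_lt_iff (Or.inl (measure_ball_pos volume z₂ (by positivity)).ne')
            (Or.inl measure_ball_lt_top.ne)).mp hr₂
      _ = 2⁻¹ * volume B := by
          rw [measure_ball_two_mul volume z₁, finrank_euclideanSpace_fin, mul_assoc,
            ← mul_assoc (2 ^ d)⁻¹, ENNReal.inv_mul_cancel (by simp) (by simp), one_mul]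
  have hlt : volume (B \ (P₁ ∩ (· - w) ⁻¹' P₂)) < volume B :=
    calc volume (B \ (P₁ ∩ (· - w) ⁻¹' P₂))
        ≤ volume (B \ P₁) + volume (B \ (· - w) ⁻¹' P₂) := by
          rw [sdiff_inter]; exact measure_union_le _ _
      _ < 2⁻¹ * volume B + 2⁻¹ * volume B := ENNReal.add_lt_add hd₁ hd₂
      _ = volume B := by rw [← add_mul, ENNReal.inv_two_add_inv_two, one_mul]
  refine pos_iff_ne_zero.mpr fun h0 => hlt.ne ?_
  exact measure_sdiff_null' (measure_mono_null inter_subset_right h0)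

end Density

section Interaction

variable {d : ℕ} {ε : ℝ} {ρ : EuclideanSpace ℝ (Fin d) → ℝ≥0∞}
  {S S' T T' P₁ P₂ : Set (EuclideanSpace ℝ (Fin d))} {z₁ z₂ : EuclideanSpace ℝ (Fin d)}

theorem IsFiniteHorizonKernel.ae_eq_zero_of_le_norm (hρ : IsFiniteHorizonKernel ε ρ)
    (hε : 0 < ε) : ∀ᵐ w, ε ≤ ‖w‖ → ρ w = 0 := by
  have hnull : volume (Function.support ρ \ closedBall 0 ε ∪ sphere 0 ε) = 0 :=
    measure_union_null (hρ.2 ▸ measure_sdiff_measSupp _)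
      (Measure.addHaar_sphere_of_ne_zero volume 0 hε.ne')
  filter_upwards [measure_eq_zero_iff_ae_notMem.mp hnull] with w hw hεw
  by_contra hρw
  rcases hεw.lt_or_eq with hlt | heq
  · exact hw (Or.inl ⟨hρw, by simpa using hlt⟩)
  · exact hw (Or.inr (by simpa using heq.symm))

def interaction (ρ : EuclideanSpace ℝ (Fin d) → ℝ≥0∞) (S T : Set (EuclideanSpace ℝ (Fin d))) :
    ℝ≥0∞ :=
  ∫⁻ a in S, ∫⁻ b in T, ρ (a - b) / edist a b

theorem gagPer_eq_two_mul_interaction : gagPer ρ S = 2 * interaction ρ S Sᶜ := rfl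

theorem interaction_mono (hS : S ⊆ S') (hT : T ⊆ T') :
    interaction ρ S T ≤ interaction ρ S' T' :=
  lintegral_mono' (Measure.restrict_mono hS le_rfl) fun _ =>
    lintegral_mono' (Measure.restrict_mono hT le_rfl) fun _ => le_rfl

theorem gagPer_congr (h : S =ᵐ[volume] T) : gagPer ρ S = gagPer ρ T := by
  simp only [gagPer, Measure.restrict_congr_set h, Measure.restrict_congr_set h.compl]

theorem measurable_lintegral_interaction (hρ : Measurable ρ)
    (T : Set (EuclideanSpace ℝ (Fin d))) :
    Measurable fun a => ∫⁻ b in T, ρ (a - b) / edist a b :=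
  ((hρ.comp (measurable_fst.sub measurable_snd)).div measurable_edist).lintegral_prod_right'

theorem interaction_union_right (hρ : Measurable ρ) (hT' : MeasurableSet T')
    (hd : Disjoint T T') :
    interaction ρ S (T ∪ T') = interaction ρ S T + interaction ρ S T' := by
  rw [interaction, interaction, interaction,
    ← lintegral_add_left (measurable_lintegral_interaction hρ T)]
  exact lintegral_congr fun a => lintegral_union hT' hd

theorem interaction_union_left (hS' : MeasurableSet S') (hd : Disjoint S S') :
    interaction ρ (S ∪ S') T = interaction ρ S T + interaction ρ S' T :=
  lintegral_union hS' hd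

theorem gagPer_add_gagPer (hρ : Measurable ρ) (hS : MeasurableSet S) (hT : MeasurableSet T)
    (hd : Disjoint S T) :
    gagPer ρ S + gagPer ρ T =
      gagPer ρ (S ∪ T) + 2 * interaction ρ S T + 2 * interaction ρ T S := by
  have hcompl {X Y : Set (EuclideanSpace ℝ (Fin d))} (h : Disjoint X Y) :
      Xᶜ = (X ∪ Y)ᶜ ∪ Y := by
    rw [compl_union, inter_union_distrib_right, compl_union_self, inter_univ,
      union_eq_left.mpr (subset_compl_iff_disjoint_left.mpr h)]
  have hTc := hcompl hd.symm
  rw [union_comm T S] at hTc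
  rw [gagPer_eq_two_mul_interaction, gagPer_eq_two_mul_interaction,
    gagPer_eq_two_mul_interaction, hcompl hd, hTc,
    interaction_union_right hρ hT (disjoint_compl_left_iff_subset.mpr subset_union_right),
    interaction_union_right hρ hS (disjoint_compl_left_iff_subset.mpr subset_union_left),
    interaction_union_left hT hd]
  ring

theorem interaction_eq_zero_iff (hρ : Measurable ρ) :
    interaction ρ S T = 0 ↔
      ∀ᵐ a ∂volume.restrict S, ∀ᵐ b ∂volume.restrict T, ρ (a - b) = 0 := by
  rw [interaction, lintegral_eq_zero_iff (measurable_lintegral_interaction hρ T)]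
  refine eventually_congr (Eventually.of_forall fun a => ?_)
  dsimp only
  rw [Pi.zero_apply, lintegral_eq_zero_iff (by fun_prop)]
  refine eventually_congr (Eventually.of_forall fun b => ?_)
  simp [ENNReal.div_eq_zero_iff, edist_ne_top]

theorem interaction_eq_zero_of_le_dist (hρ : IsFiniteHorizonKernel ε ρ) (hε : 0 < ε)
    (hT : MeasurableSet T) (h : ∀ᵐ a ∂volume.restrict S, ∀ b ∈ T, ε ≤ dist a b) :
    interaction ρ S T = 0 := by
  rw [interaction_eq_zero_iff hρ.1]
  filter_upwards [h] with a ha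
  rw [ae_restrict_iff' hT]
  filter_upwards [(Measure.measurePreserving_sub_left volume a).quasiMeasurePreserving.ae
    (hρ.ae_eq_zero_of_le_norm hε)] with b hb hbT
  exact hb (dist_eq_norm a b ▸ ha b hbT)

theorem interaction_pos_of_densityOne (hρ : IsFiniteHorizonKernel ε ρ)
    (hP₁ : MeasurableSet P₁) (hP₂ : MeasurableSet P₂) (h₁ : z₁ ∈ densityOne P₁)
    (h₂ : z₂ ∈ densityOne P₂) (h : dist z₁ z₂ ≤ ε) : 0 < interaction ρ P₁ P₂ := by
  refine pos_iff_ne_zero.mpr fun h0 => ?_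
  -- Substituting `b = a - w` and swapping the integrals (Fubini).
  have hnull : ∀ᵐ w, ρ w ≠ 0 → volume (P₁ ∩ (· - w) ⁻¹' P₂) = 0 := by
    have hswap : ∀ᵐ a ∂volume.restrict P₁, ∀ᵐ w, a - w ∈ P₂ → ρ w = 0 := by
      filter_upwards [(interaction_eq_zero_iff hρ.1).mp h0] with a ha
      rw [ae_restrict_iff' hP₂] at ha
      simpa using (Measure.measurePreserving_sub_left volume a).quasiMeasurePreserving.ae ha
    rw [Measure.ae_ae_comm (((measurable_fst.sub measurable_snd) hP₂).imp
      (hρ.1.comp measurable_snd (measurableSet_singleton 0)))] at hswap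
    filter_upwards [hswap] with w hw hρw
    rw [inter_comm, ← Measure.restrict_apply' hP₁]
    exact measure_eq_zero_iff_ae_notMem.mpr (hw.mono fun a ha haw => hρw (ha haw))
  obtain ⟨r, hr, hball⟩ := Metric.eventually_nhds_iff_ball.mp
    (eventually_measure_inter_preimage_sub_pos hP₁ hP₂ h₁ h₂)
  have hw₀ : z₁ - z₂ ∈ measSupp (Function.support ρ) := by
    rw [hρ.2, mem_closedBall_zero_iff, ← dist_eq_norm]
    exact h
  refine (hw₀ r hr).ne' (measure_mono_null ?_ (ae_iff.mp hnull))
  exact fun w ⟨hρw, hw⟩ hw0 => (hball w hw).ne' (hw0 hρw)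

theorem interaction_pos_of_measSupp (hρ : IsFiniteHorizonKernel ε ρ)
    (hP₁ : MeasurableSet P₁) (hP₂ : MeasurableSet P₂) (h₁ : z₁ ∈ measSupp P₁)
    (h₂ : z₂ ∈ measSupp P₂) (h : dist z₁ z₂ < ε) : 0 < interaction ρ P₁ P₂ := by
  have hδ : 0 < (ε - dist z₁ z₂) / 2 := by linarith
  obtain ⟨w₁, hw₁, hd₁⟩ :=
    Metric.mem_closure_iff.mp (measSupp_subset_closure_densityOne hP₁ h₁) _ hδ
  obtain ⟨w₂, hw₂, hd₂⟩ :=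
    Metric.mem_closure_iff.mp (measSupp_subset_closure_densityOne hP₂ h₂) _ hδ
  refine interaction_pos_of_densityOne hρ hP₁ hP₂ hw₁ hw₂ ?_
  linarith [dist_triangle4 w₁ z₁ z₂ w₂, dist_comm z₁ w₁]

end Interaction

section Components

variable {d : ℕ} {ε : ℝ} {ρ : EuclideanSpace ℝ (Fin d) → ℝ≥0∞}
  {A C U : Set (EuclideanSpace ℝ (Fin d))} {x : EuclideanSpace ℝ (Fin d)}

theorem epsComponent_subset_measSupp (hε : 0 < ε) (hA : MeasurableSet A) :
    epsComponent ε A x ⊆ measSupp (epsComponent ε A x) := by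
  intro c hc r hr
  have hsub : ball c (min r ε) ∩ densityOne A ⊆ epsComponent ε A x ∩ ball c r :=
    fun b ⟨hb, hbA⟩ => ⟨epsComponent_eq_of_mem hc ▸
      ball_inter_densityOne_subset_epsComponent hc.1 ⟨ball_subset_ball (min_le_right _ _) hb, hbA⟩,
      ball_subset_ball (min_le_left _ _) hb⟩
  calc 0 < volume (A ∩ ball c (min r ε)) := densityOne_subset_measSupp hc.1 _ (lt_min hr hε)
    _ = volume (ball c (min r ε) ∩ densityOne A) := by
      rw [measure_inter_densityOne hA, inter_comm]
    _ ≤ _ := measure_mono hsub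

theorem gagPer_le_of_ae_eq_inter (hρ : IsFiniteHorizonKernel ε ρ) (hε : 0 < ε)
    (hA : MeasurableSet A) (hU : MeasurableSet U) (hC : C =ᵐ[volume] (U ∩ A : Set _))
    (hsep : ∀ a ∈ C, ∀ b ∈ A \ U, ε ≤ dist a b) : gagPer ρ C ≤ gagPer ρ A := by
  have hcompl : (U ∩ A)ᶜ = A \ U ∪ Aᶜ := by
    ext; simp only [mem_compl_iff, mem_inter_iff, mem_union, Set.mem_sdiff]; tauto
  have hsep' : interaction ρ (U ∩ A) (A \ U) = 0 := by
    refine interaction_eq_zero_of_le_dist hρ hε (hA.diff hU) ?_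
    filter_upwards [ae_restrict_mem (hU.inter hA), ae_restrict_of_ae hC] with a ha haC
    exact hsep a (haC.mpr ha)
  calc gagPer ρ C = 2 * (interaction ρ (U ∩ A) (A \ U) + interaction ρ (U ∩ A) Aᶜ) := by
        rw [gagPer_congr hC, gagPer_eq_two_mul_interaction, hcompl,
          interaction_union_right hρ.1 hA.compl (disjoint_compl_right.mono_left sdiff_subset)]
    _ ≤ 2 * interaction ρ A Aᶜ := by
      rw [hsep', zero_add]
      gcongr
      exact interaction_mono inter_subset_right subset_rfl
    _ = gagPer ρ A := rfl

theorem gagPer_epsComponent_le (hρ : IsFiniteHorizonKernel ε ρ) (hε : 0 < ε)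
    (hA : MeasurableSet A) : gagPer ρ (epsComponent ε A x) ≤ gagPer ρ A := by
  refine gagPer_le_of_ae_eq_inter hρ hε hA isOpen_thickening.measurableSet ?_
    fun a ha b hb => not_lt.mp fun hab =>
      hb.2 (mem_thickening_iff.mpr ⟨a, ha, by rwa [dist_comm]⟩)
  have h := (ae_eq_refl (thickening ε (epsComponent ε A x))).inter (densityOne_ae_eq hA)
  rwa [← epsComponent_eq_thickening_inter hε] at h

theorem not_epsDecomposable_epsComponent (hρ : IsFiniteHorizonKernel ε ρ) (hε : 0 < ε)
    (hA : MeasurableSet A) (hfin : gagPer ρ A < ⊤) :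
    ¬ epsDecomposable ρ (epsComponent ε A x) := by
  rintro ⟨E₁, E₂, hE₁, hE₂, hunion, hdisj, hvol₁, hvol₂, -, -, hsum⟩
  have hJ : interaction ρ E₁ E₂ = 0 := by
    have hCfin : gagPer ρ (epsComponent ε A x) ≠ ⊤ :=
      ((gagPer_epsComponent_le hρ hε hA).trans_lt hfin).ne
    have h : gagPer ρ (epsComponent ε A x) +
        (2 * interaction ρ E₁ E₂ + 2 * interaction ρ E₂ E₁) =
          gagPer ρ (epsComponent ε A x) + 0 := by
      rw [add_zero, ← add_assoc, ← hunion, ← gagPer_add_gagPer hρ.1 hE₁ hE₂ hdisj, hunion, hsum]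
    simpa using (add_eq_zero.mp ((ENNReal.add_right_inj hCfin).mp h)).1
  have hfar : ∀ q₁ ∈ measSupp E₁, ∀ q₂ ∈ measSupp E₂, ε ≤ dist q₁ q₂ := fun q₁ h₁ q₂ h₂ =>
    not_lt.mp fun h => (interaction_pos_of_measSupp hρ hE₁ hE₂ h₁ h₂ h).ne' hJ
  have hCsupp : epsComponent ε A x ⊆ measSupp E₁ ∪ measSupp E₂ :=
    (epsComponent_subset_measSupp hε hA).trans (by rw [← hunion]; exact measSupp_union E₁ E₂)
  obtain ⟨p₁, hp₁⟩ : (E₁ ∩ measSupp E₁).Nonempty :=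
    nonempty_of_measure_ne_zero (by rw [measure_inter_measSupp]; exact hvol₁.ne')
  obtain ⟨p₂, hp₂⟩ : (E₂ ∩ measSupp E₂).Nonempty :=
    nonempty_of_measure_ne_zero (by rw [measure_inter_measSupp]; exact hvol₂.ne')
  have hp₁C : p₁ ∈ epsComponent ε A x := hunion ▸ Or.inl hp₁.1
  have hCE₁ : epsComponent ε A x ⊆ measSupp E₁ := by
    rw [← epsComponent_eq_of_mem hp₁C]
    refine (epsComponent_subset_of_forall_dist_lt (S := epsComponent ε A x ∩ measSupp E₁)
      ⟨hp₁C, hp₁.2⟩ ?_).trans inter_subset_right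
    rintro a ⟨haC, ha₁⟩ b hb hab
    have hbC : b ∈ epsComponent ε A x := epsComponent_eq_of_mem haC ▸
      ball_inter_densityOne_subset_epsComponent haC.1 ⟨mem_ball'.mpr hab, hb⟩
    exact ⟨hbC, (hCsupp hbC).resolve_right fun hb₂ => (hfar a ha₁ b hb₂).not_gt hab⟩
  exact (hfar p₂ (hCE₁ (hunion ▸ Or.inr hp₂.1)) p₂ hp₂.2).not_gt (by simpa using hε)

end Components

theorem statement3_general (d : ℕ) (ε : ℝ) (hε : 0 < ε)
    (ρ : EuclideanSpace ℝ (Fin d) → ℝ≥0∞) (hρ : IsFiniteHorizonKernel ε ρ)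
    (A : Set (EuclideanSpace ℝ (Fin d))) (hA : MeasurableSet A)
    (hfin : gagPer ρ A < ⊤)
    (x y : EuclideanSpace ℝ (Fin d)) (hx : x ∈ densityOne A) :
    (ball x ε ∩ densityOne A ⊆ epsComponent ε A x) ∧
    (epsComponent ε A x = epsComponent ε A y ∨
      ENNReal.ofReal ε ≤ setEDist (epsComponent ε A x) (epsComponent ε A y)) ∧
    (gagPer ρ (epsComponent ε A x) ≤ gagPer ρ A ∧
      ¬ epsDecomposable ρ (epsComponent ε A x)) :=
  ⟨ball_inter_densityOne_subset_epsComponent hx, epsComponent_eq_or_le_setEDist,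
    gagPer_epsComponent_le hρ hε hA, not_epsDecomposable_epsComponent hρ hε hA hfin⟩

/-- Basic properties of `ε`-connected components of a set of finite `𝔓_ε`-perimeter:
(i) `B_ε(x) ∩ E^(1) ⊆ E^x`; (ii) two components either coincide or are at distance `≥ ε`;
(iii) `𝔓_ε(E^x) ≤ 𝔓_ε(E)` and `E^x` is `ε`-indecomposable. -/
theorem statement3 (d : ℕ) (ε : ℝ) (hε : 0 < ε)
    (ρ : EuclideanSpace ℝ (Fin d) → ℝ≥0∞) (hρ : IsFiniteHorizonKernel ε ρ)
    (A : Set (EuclideanSpace ℝ (Fin d))) (hA : MeasurableSet A)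
    (hfin : gagPer ρ A < ⊤)
    (x y : EuclideanSpace ℝ (Fin d)) (hx : x ∈ densityOne A) (hy : y ∈ densityOne A) :
    (ball x ε ∩ densityOne A ⊆ epsComponent ε A x) ∧
    (epsComponent ε A x = epsComponent ε A y ∨
      ENNReal.ofReal ε ≤ setEDist (epsComponent ε A x) (epsComponent ε A y)) ∧
    (gagPer ρ (epsComponent ε A x) ≤ gagPer ρ A ∧
      ¬ epsDecomposable ρ (epsComponent ε A x)) :=
  statement3_general d ε hε ρ hρ A hA hfin x y hx
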